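/- arXiv:1606.05116 — 6 statements merged into one kernel-verified Lean document; each statement's English description precedes it below -/
import Mathlib

section
/- Let h : ℝ → ℝ be smooth with h < 0, let μ(q) = φ(q)² √(−h(q)) with φ smooth and positive, and let κ ∈ ℝ. Define Ψ(q) = ((−h(q))^{1/4} / √(μ(q))) · exp(i κ F(q)) where F' = √(−h). Then Ψ satisfies the eigenvalue equation Q̂Ψ = κΨ, where Q̂Ψ = −(i/(2μ)) [ (μ/√(−h)) Ψ' + ( (μ/√(−h)) Ψ )' ]. -/
open Complex in
/-- The wave function `Ψ = (−h)^{1/4}/√μ · exp(iκF)` satisfies the eigenvalue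
equation `Q̂Ψ = κΨ` for the Hermitian operator
`Q̂Ψ = −(i/(2μ))[(μ/√(−h))Ψ' + ((μ/√(−h))Ψ)']`. -/
theorem stmt_3
    (h φ F : ℝ → ℝ) (κ : ℝ)
    (hh : ContDiff ℝ (⊤ : ℕ∞) h) (hφ : ContDiff ℝ (⊤ : ℕ∞) φ)
    (hneg : ∀ x, h x < 0) (hφpos : ∀ x, 0 < φ x)
    (hF : ∀ x, HasDerivAt F (Real.sqrt (-h x)) x)
    (μ : ℝ → ℝ) (hμ : ∀ x, μ x = (φ x) ^ 2 * Real.sqrt (-h x))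
    (Ψ : ℝ → ℂ)
    (hΨ : ∀ x, Ψ x = (((-h x) ^ ((1 : ℝ)/4) / Real.sqrt (μ x) : ℝ) : ℂ)
        * Complex.exp (Complex.I * κ * F x)) :
    ∀ q, -(Complex.I / (2 * (μ q : ℂ))) *
        (((μ q / Real.sqrt (-h q) : ℝ) : ℂ) * deriv Ψ q
          + deriv (fun x => ((μ x / Real.sqrt (-h x) : ℝ) : ℂ) * Ψ x) q)
      = (κ : ℂ) * Ψ q := by
  intro q
  have hspos : ∀ x, 0 < Real.sqrt (-h x) := fun x => Real.sqrt_pos.2 (by linarith [hneg x])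
  have hamp : ∀ x, ((-h x) ^ ((1 : ℝ)/4) / Real.sqrt (μ x) : ℝ) = (φ x)⁻¹ := by
    intro x
    have hx : (0:ℝ) < -h x := by linarith [hneg x]
    have h4 : (-h x) ^ ((1:ℝ)/4) = Real.sqrt (Real.sqrt (-h x)) := by
      rw [Real.sqrt_eq_rpow, Real.sqrt_eq_rpow, ← Real.rpow_mul hx.le]
      norm_num
    have hsq : Real.sqrt (μ x) = φ x * Real.sqrt (Real.sqrt (-h x)) := by
      rw [hμ x, Real.sqrt_mul (sq_nonneg _), Real.sqrt_sq (hφpos x).le]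
    have hne : Real.sqrt (Real.sqrt (-h x)) ≠ 0 :=
      ne_of_gt (Real.sqrt_pos.2 (hspos x))
    rw [h4, hsq, mul_comm, div_mul_eq_div_div, div_self hne, one_div]
  have hΨ' : Ψ = fun x => Complex.exp (Complex.I * κ * F x) / ((φ x : ℝ) : ℂ) := by
    funext x
    rw [hΨ x, hamp x]
    push_cast
    ring
  have hms : ∀ x, (μ x / Real.sqrt (-h x) : ℝ) = (φ x)^2 := by
    intro x
    rw [hμ x, mul_div_assoc, div_self (ne_of_gt (hspos x)), mul_one]
  have hφd : ∀ x, HasDerivAt (fun y => ((φ y : ℝ) : ℂ)) ((deriv φ x : ℝ) : ℂ) x := by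
    intro x
    exact ((hφ.differentiable (by simp)).differentiableAt.hasDerivAt).ofReal_comp
  have hE : ∀ x, HasDerivAt (fun y => Complex.exp (Complex.I * κ * F y))
      (Complex.I * κ * (Real.sqrt (-h x) : ℂ) * Complex.exp (Complex.I * κ * F x)) x := by
    intro x
    have h1 : HasDerivAt (fun y => ((F y : ℝ) : ℂ)) ((Real.sqrt (-h x) : ℝ) : ℂ) x :=
      (hF x).ofReal_comp
    have h2 := (h1.const_mul (Complex.I * κ)).cexp
    convert h2 using 1
    ring
  have hφne : ∀ x, ((φ x : ℝ) : ℂ) ≠ 0 := fun x => by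
    exact_mod_cast ne_of_gt (hφpos x)
  have hΨq : HasDerivAt Ψ
      ((Complex.I * κ * (Real.sqrt (-h q) : ℂ) * Complex.exp (Complex.I * κ * F q)
          * ((φ q : ℝ) : ℂ)
        - Complex.exp (Complex.I * κ * F q) * ((deriv φ q : ℝ) : ℂ))
        / ((φ q : ℝ) : ℂ)^2) q := by
    rw [hΨ']
    exact (hE q).div (hφd q) (hφne q)
  have hGeq : (fun x => ((μ x / Real.sqrt (-h x) : ℝ) : ℂ) * Ψ x)
      = fun x => ((φ x : ℝ) : ℂ) * Complex.exp (Complex.I * κ * F x) := by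
    funext x
    rw [hms x, hΨ']
    push_cast
    field_simp [hφne x]
  have hGq : HasDerivAt (fun x => ((μ x / Real.sqrt (-h x) : ℝ) : ℂ) * Ψ x)
      (((deriv φ q : ℝ) : ℂ) * Complex.exp (Complex.I * κ * F q)
        + ((φ q : ℝ) : ℂ) * (Complex.I * κ * (Real.sqrt (-h q) : ℂ)
            * Complex.exp (Complex.I * κ * F q))) q := by
    rw [hGeq]
    exact (hφd q).mul (hE q)
  rw [hΨq.deriv, hGq.deriv, hΨ', hms q]
  have hμc : ((μ q : ℝ) : ℂ) = ((φ q : ℝ) : ℂ)^2 * ((Real.sqrt (-h q) : ℝ) : ℂ) := by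
    rw [hμ q]; push_cast; ring
  rw [hμc]
  have hsne : ((Real.sqrt (-h q) : ℝ) : ℂ) ≠ 0 := by
    exact_mod_cast ne_of_gt (hspos q)
  have hpne := hφne q
  have hI : Complex.I ^ 2 = -1 := Complex.I_sq
  push_cast
  field_simp [hpne, hsne]
  ring_nf
  rw [Complex.I_sq]
  ring
end

section
/- Let h : ℝ → ℝ be smooth with h < 0, let F be an antiderivative of √(−h), let φ(q) = c₁ + c₂ F(q) be positive on an interval, and set μ = φ²√(−h). Define Ψ(q) = ((−h(q))^{1/4}/√(μ(q))) exp(iκ F(q)) with κ² = 2. Then Ψ satisfies the Wheeler–DeWitt equation Ψ''/(2h) + ((h μ' − μ h')/(2 h² μ)) Ψ' − Ψ = 0 on that interval. -/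
set_option maxHeartbeats 1000000

/-- With measure `μ = √(−h)(c₁+c₂∫√(−h))²` and on-mass-shell `κ² = 2`, the
wave function `Ψ = (−h)^{1/4}/√μ · exp(iκF)` solves the Wheeler–DeWitt
equation `Ψ''/(2h) + ((hμ'−μh')/(2h²μ))Ψ' − Ψ = 0`. -/
theorem stmt_4
    (h F : ℝ → ℝ) (c₁ c₂ κ : ℝ) (a b : ℝ)
    (hh : ContDiff ℝ (⊤ : ℕ∞) h) (hneg : ∀ x, h x < 0)
    (hF : ∀ x, HasDerivAt F (Real.sqrt (-h x)) x)
    (φ : ℝ → ℝ) (hφdef : ∀ x, φ x = c₁ + c₂ * F x)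
    (hφpos : ∀ x ∈ Set.Ioo a b, 0 < φ x)
    (hκ : κ ^ 2 = 2)
    (μ : ℝ → ℝ) (hμ : ∀ x, μ x = (φ x) ^ 2 * Real.sqrt (-h x))
    (Ψ : ℝ → ℂ)
    (hΨ : ∀ x, Ψ x = (((-h x) ^ ((1 : ℝ)/4) / Real.sqrt (μ x) : ℝ) : ℂ)
        * Complex.exp (Complex.I * κ * F x)) :
    ∀ q ∈ Set.Ioo a b,
      deriv (deriv Ψ) q / (2 * (h q : ℂ))
        + (((h q * deriv μ q - μ q * deriv h q) / (2 * (h q) ^ 2 * μ q) : ℝ) : ℂ)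
          * deriv Ψ q
        - Ψ q = 0 := by
  intro q hq
  set s : ℝ → ℝ := fun x => Real.sqrt (-h x) with hs_def
  have hspos : ∀ x, 0 < s x := fun x => Real.sqrt_pos.2 (by linarith [hneg x])
  have hderivh : ∀ x, HasDerivAt h (deriv h x) x := fun x =>
    ((hh.differentiable (by simp)) x).hasDerivAt
  have hs : ∀ x, HasDerivAt s (-deriv h x / (2 * s x)) x := by
    intro x
    simpa using ((hderivh x).neg).sqrt (by simp only [Pi.neg_apply]; linarith [hneg x])
  have hφ' : ∀ x, HasDerivAt φ (c₂ * s x) x := by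
    intro x
    have h1 : HasDerivAt (fun y => c₁ + c₂ * F y) (c₂ * s x) x :=
      ((hF x).const_mul c₂).const_add c₁
    exact h1.congr_of_eventuallyEq (by filter_upwards with y using hφdef y)
  set E : ℝ → ℂ := fun x => Complex.exp (Complex.I * κ * F x) with hE_def
  have hE : ∀ x, HasDerivAt E (E x * (Complex.I * κ * s x)) x := by
    intro x
    have h1 : HasDerivAt (fun y : ℝ => ((F y : ℂ))) ((s x : ℂ)) x := (hF x).ofReal_comp
    have h2 : HasDerivAt (fun y : ℝ => Complex.I * κ * (F y : ℂ))
        (Complex.I * κ * (s x : ℂ)) x := h1.const_mul _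
    simpa [hE_def, mul_comm] using h2.cexp
  set G : ℝ → ℂ := fun x => E x / ((φ x : ℂ)) with hG_def
  have hΨG : ∀ x, 0 < φ x → Ψ x = G x := by
    intro x hx
    have hsx := hspos x
    have h4 : (-h x) ^ ((1 : ℝ)/4) = Real.sqrt (s x) := by
      rw [show ((1:ℝ)/4) = (1/2 : ℝ) * (1/2 : ℝ) by norm_num,
        Real.rpow_mul (by linarith [hneg x] : (0:ℝ) ≤ -h x), ← Real.sqrt_eq_rpow,
        ← Real.sqrt_eq_rpow]
    have hμx : Real.sqrt (μ x) = φ x * Real.sqrt (s x) := by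
      rw [hμ x, Real.sqrt_mul (sq_nonneg _), Real.sqrt_sq hx.le]
    have hne : Real.sqrt (s x) ≠ 0 := (Real.sqrt_pos.2 hsx).ne'
    rw [hΨ x, hG_def]
    have he : ((-h x) ^ ((1 : ℝ)/4) / Real.sqrt (μ x)) = (φ x)⁻¹ := by
      rw [h4, hμx]; field_simp
    rw [he]; push_cast; ring
  have hφdiff : Differentiable ℝ φ := fun x => (hφ' x).differentiableAt
  have hUopen : IsOpen {x | 0 < φ x} := isOpen_lt continuous_const hφdiff.continuous
  have hqU : q ∈ {x | 0 < φ x} := hφpos q hq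
  -- first derivative
  set G1 : ℝ → ℂ := fun x =>
    (E x * (Complex.I * κ * s x) * ((φ x : ℂ)) - E x * ((c₂ * s x : ℝ) : ℂ))
      / ((φ x : ℂ)) ^ 2 with hG1_def
  have hΨ1 : ∀ x ∈ {x | 0 < φ x}, HasDerivAt Ψ (G1 x) x := by
    intro x hx
    have hφC : HasDerivAt (fun y : ℝ => ((φ y : ℂ))) ((c₂ * s x : ℝ) : ℂ) x :=
      (hφ' x).ofReal_comp
    have hne : ((φ x : ℂ)) ≠ 0 := by
      exact_mod_cast ne_of_gt (hx : (0:ℝ) < φ x)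
    have hGx : HasDerivAt G (G1 x) x := (hE x).div hφC hne
    refine hGx.congr_of_eventuallyEq ?_
    filter_upwards [hUopen.mem_nhds hx] with y hy using hΨG y hy
  have hderivΨ : deriv Ψ =ᶠ[nhds q] G1 := by
    filter_upwards [hUopen.mem_nhds hqU] with y hy using (hΨ1 y hy).deriv
  -- values at q
  have hφq : 0 < φ q := hφpos q hq
  have hφqC : ((φ q : ℂ)) ≠ 0 := by exact_mod_cast hφq.ne'
  have hsq : (0:ℝ) < s q := hspos q
  have hsqC : ((s q : ℂ)) ≠ 0 := by exact_mod_cast hsq.ne'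
  have hs2 : s q ^ 2 = -h q := Real.sq_sqrt (by linarith [hneg q])
  set t : ℝ := deriv h q with ht_def
  -- second derivative at q
  have hφCq : HasDerivAt (fun y : ℝ => ((φ y : ℂ))) ((c₂ * s q : ℝ) : ℂ) q :=
    (hφ' q).ofReal_comp
  have hsCq : HasDerivAt (fun y : ℝ => ((s y : ℂ))) ((-t / (2 * s q) : ℝ) : ℂ) q :=
    (hs q).ofReal_comp
  have hA : HasDerivAt (fun x : ℝ => ((c₂ * s x : ℝ) : ℂ))
      ((c₂ : ℂ) * ((-t / (2 * s q) : ℝ) : ℂ)) q := by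
    refine HasDerivAt.congr_of_eventuallyEq (hsCq.const_mul ((c₂ : ℂ))) ?_
    filter_upwards with y
    push_cast; ring
  have hC : HasDerivAt (fun x : ℝ => Complex.I * κ * ((s x : ℂ)))
      (Complex.I * κ * ((-t / (2 * s q) : ℝ) : ℂ)) q := hsCq.const_mul _
  have hN := (((hE q).mul hC).mul hφCq).sub ((hE q).mul hA)
  have hDn : HasDerivAt (fun x : ℝ => ((φ x : ℂ)) ^ 2)
      (((c₂ * s q : ℝ) : ℂ) * (φ q : ℂ) + (φ q : ℂ) * ((c₂ * s q : ℝ) : ℂ)) q := by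
    refine HasDerivAt.congr_of_eventuallyEq (hφCq.mul hφCq) ?_
    filter_upwards with y using (sq ((φ y : ℂ)))
  have key := hN.div hDn (pow_ne_zero 2 hφqC)
  have hΨ2 : HasDerivAt (deriv Ψ)
      (E q * ((c₂ : ℂ) * ((t / (2 * s q) : ℝ) : ℂ) / (φ q : ℂ) ^ 2
        + 2 * (c₂ : ℂ) ^ 2 * ((s q : ℂ)) ^ 2 / (φ q : ℂ) ^ 3
        - 2 * Complex.I * κ * (c₂ : ℂ) * ((s q : ℂ)) ^ 2 / (φ q : ℂ) ^ 2
        - (κ : ℂ) ^ 2 * ((s q : ℂ)) ^ 2 / (φ q : ℂ)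
        - Complex.I * κ * ((t / (2 * s q) : ℝ) : ℂ) / (φ q : ℂ))) q := by
    refine HasDerivAt.congr_of_eventuallyEq ?_ hderivΨ
    convert key using 1
    case e'_8 => rfl
    case e'_4 => rfl
    simp only [Pi.mul_apply, Pi.sub_apply]
    push_cast
    field_simp [hsqC, hφqC]
    ring_nf
    field_simp [hsqC, hφqC]
    ring_nf
    rw [Complex.I_sq]
    ring
  -- deriv μ at q
  have hμq := (((hφ' q).pow 2).mul (hs q)).congr_of_eventuallyEq
    (by filter_upwards with y using hμ y : μ =ᶠ[nhds q] fun y => φ y ^ 2 * s y)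
  -- rewrite the goal
  rw [hΨ2.deriv, hderivΨ.self_of_nhds, hΨG q hφq, hμq.deriv, hμ q, hG1_def, hG_def]
  have hκC : (κ : ℂ) ^ 2 = 2 := by exact_mod_cast hκ
  have hhq : h q = -(s q ^ 2) := by linarith
  rw [hhq]
  rw [hκC]
  simp only [Pi.pow_apply, neg_neg, Real.sqrt_sq hsq.le, ← ht_def]
  beta_reduce
  push_cast
  field_simp [hsqC, hφqC]
  ring_nf
end

section
/- Let G : ℝ → ℝ be smooth and positive, ε = ±1, and consider the functional P[f] = ∫ₐᵇ √(−(ε + G(q) f'(q)²)) dq, defined for smooth f with ε + G(q)f'(q)² < 0 on [a,b]. Then f is a critical point of P (i.e. satisfies the Euler–Lagrange equation d/dq(∂√(−h)/∂f') − ∂√(−h)/∂f = 0 with h = ε + G f'²) if and only if f'' + (G'/G) f' + (1/(2ε)) G' f'³ = 0 (with G' = dG/dq), where ε + G f'² < 0. -/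
lemma inner_deriv (c ε y : ℝ) (h : ε + c*y^2 < 0) :
    deriv (fun z => Real.sqrt (-(ε + c*z^2))) y = -(c*y)/Real.sqrt (-(ε+c*y^2)) := by
  have hpos : 0 < -(ε + c*y^2) := by linarith
  have h1 : HasDerivAt (fun z : ℝ => -(ε + c*z^2)) (-(c*(2*y))) y := by
    simpa using (((hasDerivAt_pow 2 y).const_mul c).const_add ε).fun_neg
  have h2 := (Real.hasDerivAt_sqrt (ne_of_gt hpos)).comp y h1
  have hs : Real.sqrt (-(ε+c*y^2)) ≠ 0 := by positivity
  rw [show (fun z => Real.sqrt (-(ε + c*z^2))) = ((fun x => Real.sqrt x) ∘ fun z => -(ε + c*z^2)) from rfl, h2.deriv]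
  field_simp

lemma key_calc (G f : ℝ → ℝ) (ε : ℝ)
    (hG : ContDiff ℝ (⊤ : ℕ∞) G) (hGpos : ∀ q, 0 < G q)
    (hε : ε = 1 ∨ ε = -1)
    (hf : ContDiff ℝ (⊤ : ℕ∞) f) (q : ℝ)
    (hq : ε + G q * (deriv f q) ^ 2 < 0) :
    deriv (fun x => deriv (fun y => Real.sqrt (-(ε + G x * y ^ 2))) (deriv f x)) q
      = ε * G q * (deriv (deriv f) q + (deriv G q / G q) * deriv f q
          + (1 / (2 * ε)) * deriv G q * (deriv f q) ^ 3)
        / (Real.sqrt (-(ε + G q * (deriv f q) ^ 2)))^3 := by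
  have hf1 : ContDiff ℝ ((⊤:ℕ∞):WithTop ℕ∞) (deriv f) := (contDiff_infty_iff_deriv.mp (hf.of_le (by simp))).2
  have hf1d : Differentiable ℝ (deriv f) := hf1.differentiable (by simp)
  have hGd : Differentiable ℝ G := (hG.of_le (by simp) : ContDiff ℝ ((⊤:ℕ∞):WithTop ℕ∞) G).differentiable (by simp)
  have hHc : Continuous (fun x => ε + G x * (deriv f x)^2) :=
    continuous_const.add (hGd.continuous.mul ((hf1d.continuous).pow 2))
  have hU : IsOpen {x : ℝ | ε + G x * (deriv f x)^2 < 0} :=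
    isOpen_lt hHc continuous_const
  have hmem : {x : ℝ | ε + G x * (deriv f x)^2 < 0} ∈ nhds q := hU.mem_nhds hq
  have heq : (fun x => deriv (fun y => Real.sqrt (-(ε + G x * y ^ 2))) (deriv f x))
      =ᶠ[nhds q] (fun x => -(G x * deriv f x) / Real.sqrt (-(ε + G x * (deriv f x)^2))) := by
    filter_upwards [hmem] with x hx
    exact inner_deriv (G x) ε (deriv f x) hx
  rw [heq.deriv_eq]
  -- now compute deriv of nice function
  have hG' : HasDerivAt G (deriv G q) q := (hGd q).hasDerivAt
  have hf'' : HasDerivAt (deriv f) (deriv (deriv f) q) q := (hf1d q).hasDerivAt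
  have hpos : 0 < -(ε + G q * (deriv f q)^2) := by linarith
  have hnum : HasDerivAt (fun x => -(G x * deriv f x))
      (-(deriv G q * deriv f q + G q * deriv (deriv f) q)) q := (hG'.mul hf'').neg
  have hin : HasDerivAt (fun x => -(ε + G x * (deriv f x)^2))
      (-(deriv G q * (deriv f q)^2 + G q * (2 * deriv f q * deriv (deriv f) q))) q := by
    simpa [mul_comm, mul_assoc, mul_left_comm] using
      ((hG'.mul (hf''.pow 2)).const_add ε).fun_neg
  have hsq := (Real.hasDerivAt_sqrt (ne_of_gt hpos)).comp q hin
  have hs : Real.sqrt (-(ε + G q * (deriv f q)^2)) ≠ 0 := by positivity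
  have hdiv := hnum.fun_div hsq hs
  rw [show (fun x => -(G x * deriv f x) / Real.sqrt (-(ε + G x * (deriv f x)^2)))
      = (fun x => -(G x * deriv f x) / ((fun t => Real.sqrt t) ∘ (fun x => -(ε + G x * (deriv f x)^2))) x) from rfl,
    hdiv.deriv]
  set s := Real.sqrt (-(ε + G q * (deriv f q)^2)) with hsdef
  have hs2 : s^2 = -(ε + G q * (deriv f q)^2) := Real.sq_sqrt (le_of_lt hpos)
  have hGne : G q ≠ 0 := ne_of_gt (hGpos q)
  have hεne : ε ≠ 0 := by rcases hε with h | h <;> simp [h]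
  have hε2 : ε^2 = 1 := by rcases hε with h | h <;> norm_num [h]
  rw [div_eq_div_iff (by positivity) (by positivity)]
  show (_ * s - _) * s^3 = _
  have hs3 : s^3 = s * s^2 := by ring
  field_simp
  rw [show ((fun t => Real.sqrt t) ∘ (fun x => -(ε + G x * (deriv f x)^2))) q = s from rfl]
  linear_combination (-2*s^2*(G q*deriv (deriv f) q + deriv G q*deriv f q)) * hs2

/-- One-degree-of-freedom case of the main theorem: for
`P[f] = ∫√(−(ε + G f'²))`, the Euler–Lagrange equation
`d/dq(∂√(−h)/∂f') − ∂√(−h)/∂f = 0` is equivalent to the classical equation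
`f'' + (G'/G) f' + (1/(2ε)) G' f'³ = 0`, assuming `ε + G f'² < 0` on `[a,b]`. -/
theorem stmt_6
    (G f : ℝ → ℝ) (ε a b : ℝ)
    (hG : ContDiff ℝ (⊤ : ℕ∞) G) (hGpos : ∀ q, 0 < G q)
    (hε : ε = 1 ∨ ε = -1)
    (hf : ContDiff ℝ (⊤ : ℕ∞) f)
    (hhneg : ∀ q ∈ Set.Icc a b, ε + G q * (deriv f q) ^ 2 < 0) :
    (∀ q ∈ Set.Icc a b,
        deriv (fun x =>
          deriv (fun y => Real.sqrt (-(ε + G x * y ^ 2))) (deriv f x)) q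
        - deriv (fun _ : ℝ => Real.sqrt (-(ε + G q * (deriv f q) ^ 2))) (f q)
        = 0)
      ↔
    (∀ q ∈ Set.Icc a b,
        deriv (deriv f) q + (deriv G q / G q) * deriv f q
          + (1 / (2 * ε)) * deriv G q * (deriv f q) ^ 3 = 0) := by
  have hεne : ε ≠ 0 := by rcases hε with h | h <;> norm_num [h]
  constructor
  · intro h q hq
    have hk := key_calc G f ε hG hGpos hε hf q (hhneg q hq)
    have h0 := h q hq
    rw [deriv_const, sub_zero, hk] at h0
    have hGne : G q ≠ 0 := ne_of_gt (hGpos q)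
    have hpos : 0 < -(ε + G q * (deriv f q)^2) := by linarith [hhneg q hq]
    have hs : Real.sqrt (-(ε + G q * (deriv f q)^2)) ≠ 0 := by positivity
    rcases div_eq_zero_iff.mp h0 with h1 | h1
    · rcases mul_eq_zero.mp h1 with h2 | h2
      · exact absurd h2 (mul_ne_zero hεne hGne)
      · exact h2
    · exact absurd h1 (pow_ne_zero 3 hs)
  · intro h q hq
    have hk := key_calc G f ε hG hGpos hε hf q (hhneg q hq)
    rw [deriv_const, sub_zero, hk, h q hq, mul_zero, zero_div]
end

section
/- Let a(b) = c√(1 − 2M/b) with c > 0, M > 0. The second-variation coefficient W(b) = ∂²√(−h)/∂a'∂a' evaluated at a, where h = −8(2 b a a' + a²) (so √(−h) = √(8(2b a a' + a²)) as a function of (a, a')), equals −2√2 b² (1 − 2M/b)/c. In particular W < 0 for all b > 2M and W > 0 for all 0 < b < 2M. -/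
/-!
Along the Schwarzschild profile `a = c √(1 − 2M/b)` one has `a' = c M / (b² √(1 − 2M/b))`, so
`2 b a a' + a² = c²`: the radicand `8 (2 b a a' + a²)` is the constant `8 c²`. As a function of
`a'` alone the radicand is affine with slope `16 b a`, and `y ↦ √(p y + q)` has second derivative
`−p² / (4 (p y + q)^{3/2})`; evaluating gives `W = −(16 b a)² / (4 · 8c² · 2√2 c) = −2√2 b² (1 − 2M/b) / c`.
-/

open Real Filter Topology

lemma iteratedDeriv_two_sqrt_affine (p q y : ℝ) (h : 0 < p * y + q) :
    iteratedDeriv 2 (fun y => √(p * y + q)) y = -p ^ 2 / (4 * (p * y + q) * √(p * y + q)) := by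
  have hlin (z : ℝ) : HasDerivAt (fun y => p * y + q) p z := by
    simpa using ((hasDerivAt_id z).const_mul p).add_const q
  have hsqrt {z : ℝ} (hz : 0 < p * z + q) :
      HasDerivAt (fun y => √(p * y + q)) (1 / (2 * √(p * z + q)) * p) z :=
    (hasDerivAt_sqrt hz.ne').comp z (hlin z)
  have hderiv : deriv (fun y => √(p * y + q)) =ᶠ[𝓝 y] fun z => p / 2 * (√(p * z + q))⁻¹ := by
    have hpos : ∀ᶠ z in 𝓝 y, 0 < p * z + q :=
      (continuous_const.mul continuous_id |>.add continuous_const).continuousAt.eventually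
        (lt_mem_nhds h)
    filter_upwards [hpos] with z hz
    rw [(hsqrt hz).deriv]
    ring
  have hs : 0 < √(p * y + q) := sqrt_pos.2 h
  have hd : HasDerivAt (fun z => p / 2 * (√(p * z + q))⁻¹)
      (p / 2 * (-(1 / (2 * √(p * y + q)) * p) / √(p * y + q) ^ 2)) y :=
    ((hsqrt h).inv hs.ne').const_mul (p / 2)
  rw [iteratedDeriv_succ, iteratedDeriv_one, hderiv.deriv_eq, hd.deriv, sq_sqrt h.le]
  field_simp
  ring

lemma hasDerivAt_mul_sqrt_one_sub_div (c M : ℝ) {b : ℝ} (hb : b ≠ 0) (hu : 1 - 2 * M / b ≠ 0) :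
    HasDerivAt (fun b => c * √(1 - 2 * M / b)) (c * M / (b ^ 2 * √(1 - 2 * M / b))) b := by
  have hinner : HasDerivAt (fun x : ℝ => 1 - 2 * M / x) (-(2 * M * -(b ^ 2)⁻¹)) b :=
    ((hasDerivAt_inv hb).const_mul (2 * M)).const_sub 1
  exact (((hasDerivAt_sqrt hu).comp b hinner).const_mul c).congr_deriv (by field_simp)

lemma schwarzschild_radicand_eq_sq (c M : ℝ) {b : ℝ} (hb : b ≠ 0) (hu : 0 < 1 - 2 * M / b) :
    2 * b * (c * √(1 - 2 * M / b)) * (c * M / (b ^ 2 * √(1 - 2 * M / b)))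
      + (c * √(1 - 2 * M / b)) ^ 2 = c ^ 2 := by
  have hs : √(1 - 2 * M / b) ≠ 0 := (sqrt_pos.2 hu).ne'
  have hsq := sq_sqrt hu.le
  generalize √(1 - 2 * M / b) = s at hs hsq ⊢
  field_simp
  rw [hsq]
  field_simp
  ring

lemma iteratedDeriv_two_sqrt_radicand_schwarzschild {c M b : ℝ} (hc : 0 < c) (hb : 0 < b)
    (hu : 0 < 1 - 2 * M / b) :
    iteratedDeriv 2
      (fun y => √(8 * (2 * b * (c * √(1 - 2 * M / b)) * y + (c * √(1 - 2 * M / b)) ^ 2)))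
      (c * M / (b ^ 2 * √(1 - 2 * M / b)))
      = -2 * √2 * b ^ 2 * (1 - 2 * M / b) / c := by
  set A := c * √(1 - 2 * M / b) with hA
  have hrad : 16 * b * A * (c * M / (b ^ 2 * √(1 - 2 * M / b))) + 8 * A ^ 2 = 8 * c ^ 2 := by
    rw [← schwarzschild_radicand_eq_sq c M hb.ne' hu]
    ring
  have h8 : √(8 * c ^ 2) = 2 * √2 * c := by
    rw [show (8 : ℝ) * c ^ 2 = 2 ^ 2 * 2 * c ^ 2 by norm_num, sqrt_mul' _ (sq_nonneg c),
      sqrt_mul (by norm_num), sqrt_sq (by norm_num), sqrt_sq hc.le]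
  simp_rw [show ∀ y, 8 * (2 * b * A * y + A ^ 2) = 16 * b * A * y + 8 * A ^ 2 by
    intro y; ring]
  rw [iteratedDeriv_two_sqrt_affine _ _ _ (by rw [hrad]; positivity), hrad, h8, hA,
    mul_pow, mul_pow c, sq_sqrt hu.le]
  field_simp
  rw [sq_sqrt zero_le_two]
  ring

/-- The second-variation coefficient `W(b) = ∂²√(−h)/∂a'∂a'` evaluated on the
Schwarzschild solution `a(b) = c√(1−2M/b)` equals `−2√2 b²(1−2M/b)/c`; in
particular `W < 0` outside the horizon (`b > 2M`) and `W > 0` inside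
(`0 < b < 2M`). -/
theorem stmt_10
    (c M : ℝ) (hc : 0 < c) (hM : 0 < M)
    (a : ℝ → ℝ) (ha : ∀ b, a b = c * Real.sqrt (1 - 2 * M / b))
    (W : ℝ → ℝ)
    (hW : ∀ b, W b = -2 * Real.sqrt 2 * b ^ 2 * (1 - 2 * M / b) / c) :
    (∀ b, 2 * M < b →
      iteratedDeriv 2
        (fun y => Real.sqrt (8 * (2 * b * a b * y + (a b) ^ 2))) (deriv a b)
        = W b)
    ∧ (∀ b, 2 * M < b → W b < 0)
    ∧ (∀ b, 0 < b → b < 2 * M → 0 < W b) := by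
  have hWb {b : ℝ} (hb : b ≠ 0) : W b = -(2 * √2 / c) * (b * (b - 2 * M)) := by
    rw [hW]; field_simp
  have hcoeff : -(2 * √2 / c) < 0 := neg_lt_zero.2 (by positivity)
  refine ⟨fun b hb => ?_, fun b hb => ?_, fun b hb hb' => ?_⟩
  · have hb0 : 0 < b := by linarith
    have hu : 0 < 1 - 2 * M / b := by rwa [sub_pos, div_lt_one hb0]
    have ha' : deriv a b = c * M / (b ^ 2 * √(1 - 2 * M / b)) := by
      rw [funext ha]
      exact (hasDerivAt_mul_sqrt_one_sub_div c M hb0.ne' hu.ne').deriv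
    rw [ha', hW, ha]
    exact iteratedDeriv_two_sqrt_radicand_schwarzschild hc hb0 hu
  · have hb0 : 0 < b := by linarith
    rw [hWb hb0.ne']
    exact mul_neg_of_neg_of_pos hcoeff (mul_pos hb0 (sub_pos.2 hb))
  · rw [hWb hb.ne']
    exact mul_pos_of_neg_of_neg hcoeff (mul_neg_of_pos_of_neg hb (sub_neg.2 hb'))
end

section
/- Let G be a smooth pseudo-Riemannian metric on an open subset of ℝⁿ, q : I → ℝⁿ a smooth curve with K(t) := G_{αβ}(q(t)) q̇^α q̇^β ≠ 0, and V a smooth positive function. Then for every such smooth curve q (not only for solutions of the equations q̈^μ + Γ^μ_{νλ} q̇^ν q̇^λ − (1/2)(K̇/K) q̇^μ + (1/2)(∂_κV/V) q̇^κ q̇^μ − (K/(2V)) G^{μκ} ∂_κV = 0), the n equations obey one exact linear dependency: 2 G_{μρ} q̇^ρ · [q̈^μ + Γ^μ_{νλ} q̇^ν q̇^λ − (1/2)(K̇/K) q̇^μ + (1/2)(∂_κV/V) q̇^κ q̇^μ − (K/(2V)) G^{μκ} ∂_κV] = 0 identically. -/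
/-- Partial derivative in the `i`-th coordinate direction. -/
noncomputable def pd {n : ℕ} (i : Fin n) (f : (Fin n → ℝ) → ℝ)
    (x : Fin n → ℝ) : ℝ :=
  fderiv ℝ f x (Pi.single i 1)

/-- Christoffel symbols of a metric `G` with inverse `Ginv`. -/
noncomputable def christoffel {n : ℕ}
    (G Ginv : (Fin n → ℝ) → Matrix (Fin n) (Fin n) ℝ)
    (x : Fin n → ℝ) (μ ν lam : Fin n) : ℝ :=
  (1/2) * ∑ ρ : Fin n, Ginv x μ ρ *
    (pd ν (fun y => G y ρ lam) x + pd lam (fun y => G y ρ ν) x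
      - pd ρ (fun y => G y ν lam) x)

lemma fderiv_eq_sum_pd {n : ℕ} (f : (Fin n → ℝ) → ℝ)
    (x w : Fin n → ℝ) : fderiv ℝ f x w = ∑ σ : Fin n, w σ * pd σ f x := by
  have hw : w = ∑ σ : Fin n, w σ • (Pi.single σ 1 : Fin n → ℝ) := by
    funext j
    simp [Pi.single_apply, Finset.sum_apply]
  conv_lhs => rw [hw]
  rw [map_sum]
  simp [pd, smul_eq_mul]

lemma hasDerivAt_comp_q {n : ℕ} (q : ℝ → Fin n → ℝ) (hq : ContDiff ℝ (⊤ : ℕ∞) q)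
    (f : (Fin n → ℝ) → ℝ) (hf : ContDiff ℝ (⊤ : ℕ∞) f) (t : ℝ) :
    HasDerivAt (fun s => f (q s))
      (∑ σ : Fin n, pd σ f (q t) * deriv (fun s => q s σ) t) t := by
  have hq' : HasDerivAt q (deriv q t) t :=
    (hq.differentiable (by simp) t).hasDerivAt
  have hcoord : ∀ σ : Fin n, deriv (fun s => q s σ) t = deriv q t σ := by
    intro σ
    exact (((ContinuousLinearMap.proj σ : ((Fin n → ℝ)) →L[ℝ] ℝ)).hasFDerivAt.comp_hasDerivAt t hq').deriv
  have h := ((hf.differentiable (by simp) (q t)).hasFDerivAt).comp_hasDerivAt t hq'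
  refine h.congr_deriv ?_
  rw [fderiv_eq_sum_pd f]
  exact Finset.sum_congr rfl fun σ _ => by rw [hcoord σ]; ring


open Finset

section Alg
variable {n : ℕ}

lemma contractC (gi : Fin n → Fin n → ℝ) (L v w : Fin n → ℝ)
    (X : Fin n → Fin n → Fin n → ℝ)
    (hcon : ∀ σ, ∑ μ : Fin n, L μ * gi μ σ = w σ) :
    ∑ μ : Fin n, 2 * L μ *
        (∑ ν : Fin n, ∑ l : Fin n, ((1/2) * ∑ ρ : Fin n, gi μ ρ * X ν ρ l) * v ν * v l)
      = ∑ ν : Fin n, ∑ l : Fin n, ∑ ρ : Fin n, w ρ * X ν ρ l * v ν * v l := by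
  have step1 : ∀ μ : Fin n, 2 * L μ *
        (∑ ν : Fin n, ∑ l : Fin n, ((1/2) * ∑ ρ : Fin n, gi μ ρ * X ν ρ l) * v ν * v l)
      = ∑ ν : Fin n, ∑ l : Fin n, ∑ ρ : Fin n, (L μ * gi μ ρ) * (X ν ρ l * v ν * v l) := by
    intro μ
    simp only [Finset.mul_sum, Finset.sum_mul]
    refine Finset.sum_congr rfl fun ν _ => Finset.sum_congr rfl fun l _ =>
      Finset.sum_congr rfl fun ρ _ => by ring
  calc ∑ μ : Fin n, 2 * L μ *
        (∑ ν : Fin n, ∑ l : Fin n, ((1/2) * ∑ ρ : Fin n, gi μ ρ * X ν ρ l) * v ν * v l)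
      = ∑ μ : Fin n, ∑ ν : Fin n, ∑ l : Fin n, ∑ ρ : Fin n,
          (L μ * gi μ ρ) * (X ν ρ l * v ν * v l) := Finset.sum_congr rfl fun μ _ => step1 μ
    _ = ∑ ν : Fin n, ∑ μ : Fin n, ∑ l : Fin n, ∑ ρ : Fin n,
          (L μ * gi μ ρ) * (X ν ρ l * v ν * v l) := Finset.sum_comm
    _ = ∑ ν : Fin n, ∑ l : Fin n, ∑ μ : Fin n, ∑ ρ : Fin n,
          (L μ * gi μ ρ) * (X ν ρ l * v ν * v l) :=
        Finset.sum_congr rfl fun ν _ => Finset.sum_comm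
    _ = ∑ ν : Fin n, ∑ l : Fin n, ∑ ρ : Fin n, ∑ μ : Fin n,
          (L μ * gi μ ρ) * (X ν ρ l * v ν * v l) :=
        Finset.sum_congr rfl fun ν _ => Finset.sum_congr rfl fun l _ => Finset.sum_comm
    _ = ∑ ν : Fin n, ∑ l : Fin n, ∑ ρ : Fin n, w ρ * X ν ρ l * v ν * v l := by
        refine Finset.sum_congr rfl fun ν _ => Finset.sum_congr rfl fun l _ =>
          Finset.sum_congr rfl fun ρ _ => ?_
        rw [show ∑ μ : Fin n, (L μ * gi μ ρ) * (X ν ρ l * v ν * v l)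
            = (∑ μ : Fin n, L μ * gi μ ρ) * (X ν ρ l * v ν * v l) by
          rw [Finset.sum_mul]]
        rw [hcon ρ]; ring

lemma contractW (gi : Fin n → Fin n → ℝ) (L w P : Fin n → ℝ) (c : ℝ)
    (hcon : ∀ σ, ∑ μ : Fin n, L μ * gi μ σ = w σ) :
    ∑ μ : Fin n, 2 * L μ * (c * ∑ κ : Fin n, gi μ κ * P κ)
      = 2 * c * ∑ κ : Fin n, w κ * P κ := by
  have step1 : ∀ μ : Fin n, 2 * L μ * (c * ∑ κ : Fin n, gi μ κ * P κ)
      = ∑ κ : Fin n, (2 * c) * ((L μ * gi μ κ) * P κ) := by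
    intro μ; simp only [Finset.mul_sum]
    exact Finset.sum_congr rfl fun κ _ => by ring
  calc ∑ μ : Fin n, 2 * L μ * (c * ∑ κ : Fin n, gi μ κ * P κ)
      = ∑ μ : Fin n, ∑ κ : Fin n, (2*c) * ((L μ * gi μ κ) * P κ) :=
        Finset.sum_congr rfl fun μ _ => step1 μ
    _ = ∑ κ : Fin n, ∑ μ : Fin n, (2*c) * ((L μ * gi μ κ) * P κ) := Finset.sum_comm
    _ = 2 * c * ∑ κ : Fin n, w κ * P κ := by
        rw [Finset.mul_sum]
        refine Finset.sum_congr rfl fun κ _ => ?_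
        have h : ∑ μ : Fin n, (2*c) * ((L μ * gi μ κ) * P κ)
            = (2*c) * ((∑ μ : Fin n, L μ * gi μ κ) * P κ) := by
          rw [Finset.sum_mul, Finset.mul_sum]
        rw [h, hcon κ]

lemma algebra_main (g gi : Fin n → Fin n → ℝ) (v a P : Fin n → ℝ)
    (D : Fin n → Fin n → Fin n → ℝ) (Kt K' Vt : ℝ)
    (hsymm : ∀ α β, g α β = g β α)
    (hright : ∀ α β, ∑ ρ : Fin n, g α ρ * gi ρ β = if α = β then 1 else 0)
    (hKt : Kt = ∑ α : Fin n, ∑ β : Fin n, g α β * v α * v β)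
    (hK' : K' = ∑ α : Fin n, ∑ β : Fin n,
      (((∑ σ : Fin n, D σ α β * v σ) * v α + g α β * a α) * v β + g α β * v α * a β))
    (hK0 : Kt ≠ 0) (hV0 : Vt ≠ 0) :
    ∑ μ : Fin n, 2 * (∑ ρ : Fin n, g μ ρ * v ρ) *
      (a μ
       + (∑ ν : Fin n, ∑ l : Fin n,
            ((1/2) * ∑ ρ : Fin n, gi μ ρ * (D ν ρ l + D l ρ ν - D ρ ν l)) * v ν * v l)
       - (1/2) * (K'/Kt) * v μ
       + (1/2) * ((∑ κ : Fin n, P κ * v κ)/Vt) * v μ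
       - (Kt/(2*Vt)) * ∑ κ : Fin n, gi μ κ * P κ) = 0 := by
  -- contraction identity
  have hcon : ∀ σ, ∑ μ : Fin n, (∑ ρ : Fin n, g μ ρ * v ρ) * gi μ σ = v σ := by
    intro σ
    calc ∑ μ : Fin n, (∑ ρ : Fin n, g μ ρ * v ρ) * gi μ σ
        = ∑ μ : Fin n, ∑ ρ : Fin n, g μ ρ * v ρ * gi μ σ := by
          exact Finset.sum_congr rfl fun μ _ => by rw [Finset.sum_mul]
      _ = ∑ ρ : Fin n, ∑ μ : Fin n, g μ ρ * v ρ * gi μ σ := Finset.sum_comm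
      _ = ∑ ρ : Fin n, (∑ μ : Fin n, g ρ μ * gi μ σ) * v ρ := by
          refine Finset.sum_congr rfl fun ρ _ => ?_
          rw [Finset.sum_mul]
          exact Finset.sum_congr rfl fun μ _ => by rw [hsymm μ ρ]; ring
      _ = ∑ ρ : Fin n, (if ρ = σ then 1 else 0) * v ρ := by
          exact Finset.sum_congr rfl fun ρ _ => by rw [hright ρ σ]
      _ = v σ := by simp
  have hKvv : ∑ μ : Fin n, (∑ ρ : Fin n, g μ ρ * v ρ) * v μ = Kt := by
    rw [hKt]
    simp only [Finset.sum_mul]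
    exact Finset.sum_congr rfl fun μ _ => Finset.sum_congr rfl fun ρ _ => by ring
  have hC := contractC gi (fun μ => ∑ ρ : Fin n, g μ ρ * v ρ) v v
    (fun ν ρ l => D ν ρ l + D l ρ ν - D ρ ν l) hcon
  have hW := contractW gi (fun μ => ∑ ρ : Fin n, g μ ρ * v ρ) v P (Kt/(2*Vt)) hcon
  -- S
  set S : ℝ := ∑ x : Fin n, ∑ y : Fin n, ∑ z : Fin n, D x y z * v x * v y * v z with hS
  have hSS : ∑ ν : Fin n, ∑ l : Fin n, ∑ ρ : Fin n,
      v ρ * (D ν ρ l + D l ρ ν - D ρ ν l) * v ν * v l = S := by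
    have split : ∀ ν l ρ : Fin n, v ρ * (D ν ρ l + D l ρ ν - D ρ ν l) * v ν * v l
        = D ν ρ l * v ν * v ρ * v l + D l ρ ν * v l * v ρ * v ν - D ρ ν l * v ρ * v ν * v l := by
      intro ν l ρ; ring
    simp only [split, Finset.sum_add_distrib, Finset.sum_sub_distrib]
    have hA1 : ∑ ν : Fin n, ∑ l : Fin n, ∑ ρ : Fin n, D ν ρ l * v ν * v ρ * v l = S := by
      rw [hS]
      exact Finset.sum_congr rfl fun ν _ => Finset.sum_comm
    have hA2 : ∑ ν : Fin n, ∑ l : Fin n, ∑ ρ : Fin n, D l ρ ν * v l * v ρ * v ν = S := by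
      rw [hS]
      calc ∑ ν : Fin n, ∑ l : Fin n, ∑ ρ : Fin n, D l ρ ν * v l * v ρ * v ν
          = ∑ l : Fin n, ∑ ν : Fin n, ∑ ρ : Fin n, D l ρ ν * v l * v ρ * v ν :=
            Finset.sum_comm
        _ = ∑ l : Fin n, ∑ ρ : Fin n, ∑ ν : Fin n, D l ρ ν * v l * v ρ * v ν :=
            Finset.sum_congr rfl fun l _ => Finset.sum_comm
    have hA3 : ∑ ν : Fin n, ∑ l : Fin n, ∑ ρ : Fin n, D ρ ν l * v ρ * v ν * v l = S := by
      rw [hS]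
      calc ∑ ν : Fin n, ∑ l : Fin n, ∑ ρ : Fin n, D ρ ν l * v ρ * v ν * v l
          = ∑ ν : Fin n, ∑ ρ : Fin n, ∑ l : Fin n, D ρ ν l * v ρ * v ν * v l :=
            Finset.sum_congr rfl fun ν _ => Finset.sum_comm
        _ = ∑ ρ : Fin n, ∑ ν : Fin n, ∑ l : Fin n, D ρ ν l * v ρ * v ν * v l :=
            Finset.sum_comm
    rw [hA1, hA2, hA3]; ring
  -- K' = E1 + S
  have hK'2 : K' = (∑ μ : Fin n, 2 * (∑ ρ : Fin n, g μ ρ * v ρ) * a μ) + S := by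
    rw [hK']
    have expand : ∀ α β : Fin n,
        ((∑ σ : Fin n, D σ α β * v σ) * v α + g α β * a α) * v β + g α β * v α * a β
        = (∑ σ : Fin n, D σ α β * v σ * v α * v β)
          + (g α β * a α * v β + g α β * v α * a β) := by
      intro α β
      have h1 : (∑ σ : Fin n, D σ α β * v σ) * v α * v β
          = ∑ σ : Fin n, D σ α β * v σ * v α * v β := by
        rw [Finset.sum_mul, Finset.sum_mul]
      calc ((∑ σ : Fin n, D σ α β * v σ) * v α + g α β * a α) * v β + g α β * v α * a β
          = (∑ σ : Fin n, D σ α β * v σ) * v α * v β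
            + (g α β * a α * v β + g α β * v α * a β) := by ring
        _ = _ := by rw [h1]
    simp only [expand, Finset.sum_add_distrib]
    have hfirst : ∑ α : Fin n, ∑ β : Fin n, ∑ σ : Fin n, D σ α β * v σ * v α * v β = S := by
      rw [hS]
      calc ∑ α : Fin n, ∑ β : Fin n, ∑ σ : Fin n, D σ α β * v σ * v α * v β
          = ∑ α : Fin n, ∑ σ : Fin n, ∑ β : Fin n, D σ α β * v σ * v α * v β :=
            Finset.sum_congr rfl fun α _ => Finset.sum_comm
        _ = ∑ σ : Fin n, ∑ α : Fin n, ∑ β : Fin n, D σ α β * v σ * v α * v β :=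
            Finset.sum_comm
        _ = ∑ x : Fin n, ∑ y : Fin n, ∑ z : Fin n, D x y z * v x * v y * v z :=
            Finset.sum_congr rfl fun x _ => Finset.sum_congr rfl fun y _ =>
              Finset.sum_congr rfl fun z _ => by ring
    have hsecond : (∑ α : Fin n, ∑ β : Fin n, g α β * a α * v β)
        + (∑ α : Fin n, ∑ β : Fin n, g α β * v α * a β)
        = ∑ μ : Fin n, 2 * (∑ ρ : Fin n, g μ ρ * v ρ) * a μ := by
      have h2 : ∑ α : Fin n, ∑ β : Fin n, g α β * v α * a β
          = ∑ μ : Fin n, ∑ ρ : Fin n, g μ ρ * v ρ * a μ := by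
        rw [Finset.sum_comm]
        exact Finset.sum_congr rfl fun μ _ => Finset.sum_congr rfl fun ρ _ => by
          rw [hsymm ρ μ]
      have h1 : ∑ α : Fin n, ∑ β : Fin n, g α β * a α * v β
          = ∑ μ : Fin n, ∑ ρ : Fin n, g μ ρ * v ρ * a μ :=
        Finset.sum_congr rfl fun μ _ => Finset.sum_congr rfl fun ρ _ => by ring
      rw [h1, h2]
      have h3 : ∀ μ : Fin n, 2 * (∑ ρ : Fin n, g μ ρ * v ρ) * a μ
          = ∑ ρ : Fin n, (g μ ρ * v ρ * a μ + g μ ρ * v ρ * a μ) := by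
        intro μ
        rw [Finset.sum_add_distrib]
        rw [show (2 : ℝ) * (∑ ρ : Fin n, g μ ρ * v ρ) * a μ
            = (∑ ρ : Fin n, g μ ρ * v ρ) * a μ + (∑ ρ : Fin n, g μ ρ * v ρ) * a μ by ring]
        rw [Finset.sum_mul]
      simp only [h3, Finset.sum_add_distrib]
    rw [hfirst]
    rw [← hsecond]
    ring
  -- main expansion
  have split : ∀ μ : Fin n, 2 * (∑ ρ : Fin n, g μ ρ * v ρ) *
      (a μ
       + (∑ ν : Fin n, ∑ l : Fin n,
            ((1/2) * ∑ ρ : Fin n, gi μ ρ * (D ν ρ l + D l ρ ν - D ρ ν l)) * v ν * v l)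
       - (1/2) * (K'/Kt) * v μ
       + (1/2) * ((∑ κ : Fin n, P κ * v κ)/Vt) * v μ
       - (Kt/(2*Vt)) * ∑ κ : Fin n, gi μ κ * P κ)
      = 2 * (∑ ρ : Fin n, g μ ρ * v ρ) * a μ
        + 2 * (∑ ρ : Fin n, g μ ρ * v ρ) *
          (∑ ν : Fin n, ∑ l : Fin n,
            ((1/2) * ∑ ρ : Fin n, gi μ ρ * (D ν ρ l + D l ρ ν - D ρ ν l)) * v ν * v l)
        - (K'/Kt) * ((∑ ρ : Fin n, g μ ρ * v ρ) * v μ)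
        + ((∑ κ : Fin n, P κ * v κ)/Vt) * ((∑ ρ : Fin n, g μ ρ * v ρ) * v μ)
        - 2 * (∑ ρ : Fin n, g μ ρ * v ρ) *
            ((Kt/(2*Vt)) * ∑ κ : Fin n, gi μ κ * P κ) := by
    intro μ; ring
  simp only [split, Finset.sum_add_distrib, Finset.sum_sub_distrib]
  rw [hC, hSS, hW]
  rw [show ∑ μ : Fin n, (K'/Kt) * ((∑ ρ : Fin n, g μ ρ * v ρ) * v μ)
      = (K'/Kt) * ∑ μ : Fin n, (∑ ρ : Fin n, g μ ρ * v ρ) * v μ by rw [Finset.mul_sum]]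
  rw [show ∑ μ : Fin n, ((∑ κ : Fin n, P κ * v κ)/Vt) * ((∑ ρ : Fin n, g μ ρ * v ρ) * v μ)
      = ((∑ κ : Fin n, P κ * v κ)/Vt) * ∑ μ : Fin n, (∑ ρ : Fin n, g μ ρ * v ρ) * v μ by
    rw [Finset.mul_sum]]
  rw [hKvv, hK'2]
  have hPv : ∑ κ : Fin n, v κ * P κ = ∑ κ : Fin n, P κ * v κ :=
    Finset.sum_congr rfl fun κ _ => by ring
  rw [hPv]
  field_simp
  ring

/-- After eliminating the lapse via the constraint, the `n` second-order
equations (eq. (10) of the paper) obey one exact linear dependency: their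
contraction with `2G_{μρ}q̇^ρ` vanishes identically for any smooth curve. -/
theorem stmt_13 {n : ℕ}
    (G Ginv : (Fin n → ℝ) → Matrix (Fin n) (Fin n) ℝ)
    (V : (Fin n → ℝ) → ℝ)
    (q : ℝ → Fin n → ℝ)
    (hG : ∀ α β, ContDiff ℝ (⊤ : ℕ∞) (fun y => G y α β))
    (hV : ContDiff ℝ (⊤ : ℕ∞) V) (hVpos : ∀ y, 0 < V y)
    (hq : ContDiff ℝ (⊤ : ℕ∞) q)
    (hsymm : ∀ y α β, G y α β = G y β α)
    (hinv : ∀ y α β, ∑ ρ : Fin n, Ginv y α ρ * G y ρ β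
      = if α = β then 1 else 0)
    (K : ℝ → ℝ)
    (hK : ∀ t, K t = ∑ α : Fin n, ∑ β : Fin n,
      G (q t) α β * deriv (fun s => q s α) t * deriv (fun s => q s β) t)
    (hK0 : ∀ t, K t ≠ 0)
    (E : Fin n → ℝ → ℝ)
    (hE : ∀ μ t, E μ t =
      deriv (deriv (fun s => q s μ)) t
      + (∑ ν : Fin n, ∑ lam : Fin n, christoffel G Ginv (q t) μ ν lam
          * deriv (fun s => q s ν) t * deriv (fun s => q s lam) t)
      - (1/2) * (deriv K t / K t) * deriv (fun s => q s μ) t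
      + (1/2) * ((∑ κ : Fin n, pd κ V (q t) * deriv (fun s => q s κ) t)
          / V (q t)) * deriv (fun s => q s μ) t
      - (K t / (2 * V (q t))) * ∑ κ : Fin n, Ginv (q t) μ κ * pd κ V (q t)) :
    ∀ t, ∑ μ : Fin n,
      2 * (∑ ρ : Fin n, G (q t) μ ρ * deriv (fun s => q s ρ) t) * E μ t = 0 := by
  intro t
  -- coordinate smoothness
  have hqc : ∀ σ : Fin n, ContDiff ℝ (⊤ : ℕ∞) (fun s => q s σ) := fun σ =>
    (ContinuousLinearMap.proj σ : ((Fin n → ℝ)) →L[ℝ] ℝ).contDiff.comp hq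
  have hv : ∀ σ : Fin n, Differentiable ℝ (deriv (fun s => q s σ)) := fun σ =>
    ((contDiff_infty_iff_deriv.mp ((hqc σ).of_le (by simp))).2).differentiable (by simp)
  -- derivative of K
  have hDK : HasDerivAt
      (fun u => ∑ α : Fin n, ∑ β : Fin n,
        G (q u) α β * deriv (fun s => q s α) u * deriv (fun s => q s β) u)
      (∑ α : Fin n, ∑ β : Fin n,
        (((∑ σ : Fin n, pd σ (fun y => G y α β) (q t) * deriv (fun s => q s σ) t)
            * deriv (fun s => q s α) t
          + G (q t) α β * deriv (deriv (fun s => q s α)) t) * deriv (fun s => q s β) t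
         + G (q t) α β * deriv (fun s => q s α) t * deriv (deriv (fun s => q s β)) t)) t := by
    apply HasDerivAt.fun_sum
    intro α _
    apply HasDerivAt.fun_sum
    intro β _
    exact ((hasDerivAt_comp_q q hq _ (hG α β) t).mul
        ((hv α t).hasDerivAt)).mul
      ((hv β t).hasDerivAt)
  have hKfun : K = fun u => ∑ α : Fin n, ∑ β : Fin n,
      G (q u) α β * deriv (fun s => q s α) u * deriv (fun s => q s β) u := funext hK
  have hderivK : deriv K t = ∑ α : Fin n, ∑ β : Fin n,
      (((∑ σ : Fin n, pd σ (fun y => G y α β) (q t) * deriv (fun s => q s σ) t)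
          * deriv (fun s => q s α) t
        + G (q t) α β * deriv (deriv (fun s => q s α)) t) * deriv (fun s => q s β) t
       + G (q t) α β * deriv (fun s => q s α) t * deriv (deriv (fun s => q s β)) t) := by
    rw [hKfun]
    exact hDK.deriv
  -- right inverse
  have hm : Ginv (q t) * G (q t) = 1 := by
    ext α β
    rw [Matrix.mul_apply, hinv (q t) α β, Matrix.one_apply]
  have hm2 : G (q t) * Ginv (q t) = 1 := mul_eq_one_comm.mp hm
  have hright : ∀ α β : Fin n, ∑ ρ : Fin n, G (q t) α ρ * Ginv (q t) ρ β
      = if α = β then 1 else 0 := by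
    intro α β
    rw [show ∑ ρ : Fin n, G (q t) α ρ * Ginv (q t) ρ β
        = (G (q t) * Ginv (q t)) α β from (Matrix.mul_apply).symm, hm2, Matrix.one_apply]
  -- apply the algebraic identity
  have halg := algebra_main (fun α β => G (q t) α β) (fun α β => Ginv (q t) α β)
    (fun σ => deriv (fun s => q s σ) t)
    (fun μ => deriv (deriv (fun s => q s μ)) t)
    (fun κ => pd κ V (q t))
    (fun σ α β => pd σ (fun y => G y α β) (q t))
    (K t) (deriv K t) (V (q t))
    (fun α β => hsymm (q t) α β) hright (hK t) hderivK (hK0 t) (hVpos (q t)).ne'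
  calc ∑ μ : Fin n,
      2 * (∑ ρ : Fin n, G (q t) μ ρ * deriv (fun s => q s ρ) t) * E μ t
      = ∑ μ : Fin n, 2 * (∑ ρ : Fin n, G (q t) μ ρ * deriv (fun s => q s ρ) t) *
        (deriv (deriv (fun s => q s μ)) t
         + (∑ ν : Fin n, ∑ l : Fin n,
              ((1/2) * ∑ ρ : Fin n, Ginv (q t) μ ρ *
                (pd ν (fun y => G y ρ l) (q t) + pd l (fun y => G y ρ ν) (q t)
                  - pd ρ (fun y => G y ν l) (q t))) * deriv (fun s => q s ν) t
                * deriv (fun s => q s l) t)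
         - (1/2) * (deriv K t / K t) * deriv (fun s => q s μ) t
         + (1/2) * ((∑ κ : Fin n, pd κ V (q t) * deriv (fun s => q s κ) t)
              / V (q t)) * deriv (fun s => q s μ) t
         - (K t / (2 * V (q t))) * ∑ κ : Fin n, Ginv (q t) μ κ * pd κ V (q t)) := by
        refine Finset.sum_congr rfl fun μ _ => ?_
        rw [hE μ t]
        simp only [christoffel]
    _ = 0 := halg
end Alg
end

section
/- Let a(b) = c₂ √(1 − c₁/b) with c₂ > 0, c₁ > 0, on b > c₁. Then a satisfies the ODE a (b a'' + 2a') + b a'² = 0, and conversely this is the Euler–Lagrange equation (in a, with b as independent variable) of the functional P = ∫ √(8(2 b a a' + a²)) db. -/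
/-!
Write `E(A)(b) = A (b A'' + 2A') + b A'²`. Since `b · E(A) = (b² A A')'`, the explicit
solution is handled by its first integral: `a² = c₂² (1 - c₁/b)` gives `b² a a' = c₁ c₂² / 2`.

For the Euler–Lagrange equation put `S = 2bAA' + A²` and `L = √(8S)`. Then
`∂L/∂A' = 8bA/L`, `∂L/∂A = 8(bA' + A)/L` and `S' = 2E(A)`, so
`(∂L/∂A')' - ∂L/∂A = -64 b A E(A) / L³`. As `A > 0` this vanishes exactly where `E(A)` does,
except possibly at `b = 0`, where `E(A)` vanishes by continuity.
-/

open Filter Topology Set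

theorem Continuous.eqOn_of_eqOn_diff_singleton {X Y : Type*} [TopologicalSpace X]
    [TopologicalSpace Y] [T2Space Y] {f g : X → Y} {U : Set X} {c : X} [(𝓝[≠] c).NeBot]
    (hf : Continuous f) (hg : Continuous g) (hU : IsOpen U) (h : EqOn f g (U \ {c})) :
    EqOn f g U :=
  h.of_subset_closure hf.continuousOn hg.continuousOn sdiff_subset
    ((dense_compl_singleton c).open_subset_closure_inter hU)

namespace BianchiIII

noncomputable def odeResidual (A : ℝ → ℝ) (b : ℝ) : ℝ :=
  A b * (b * deriv (deriv A) b + 2 * deriv A b) + b * deriv A b ^ 2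

theorem odeResidual_eq_zero_of_mul_deriv_eq {g : ℝ → ℝ} {b k : ℝ} (hb : b ≠ 0)
    (hg : DifferentiableAt ℝ g b) (hg' : DifferentiableAt ℝ (deriv g) b)
    (hconst : ∀ᶠ x in 𝓝 b, g x * deriv g x = k / x ^ 2) : odeResidual g b = 0 := by
  have hk : HasDerivAt (fun x => k / x ^ 2) (-2 * k / b ^ 3) b := by
    refine ((hasDerivAt_const b k).fun_div (hasDerivAt_pow 2 b) (pow_ne_zero 2 hb)).congr_deriv ?_
    field_simp
    ring
  have hprod : deriv g b * deriv g b + g b * deriv (deriv g) b = -2 * k / b ^ 3 :=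
    (hg.hasDerivAt.fun_mul hg'.hasDerivAt).unique (hk.congr_of_eventuallyEq hconst)
  have hgg' : g b * deriv g b = k / b ^ 2 := hconst.self_of_nhds
  calc odeResidual g b
      = b * (deriv g b * deriv g b + g b * deriv (deriv g) b) + 2 * (g b * deriv g b) := by
        unfold odeResidual; ring
    _ = 0 := by rw [hprod, hgg']; field_simp; ring

noncomputable def solution (c₁ c₂ : ℝ) (x : ℝ) : ℝ := c₂ * √(1 - c₁ / x)

section Solution

variable {c₁ b : ℝ} (c₂ : ℝ)

theorem one_sub_div_pos (hc₁ : 0 < c₁) (hb : c₁ < b) : 0 < 1 - c₁ / b :=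
  sub_pos.2 ((div_lt_one (hc₁.trans hb)).2 hb)

theorem hasDerivAt_solution (hc₁ : 0 < c₁) (hb : c₁ < b) :
    HasDerivAt (solution c₁ c₂) (c₂ * (c₁ / b ^ 2 / (2 * √(1 - c₁ / b)))) b := by
  have hinner : HasDerivAt (fun x => 1 - c₁ / x) (c₁ / b ^ 2) b := by
    refine ((hasDerivAt_const b c₁).fun_div (hasDerivAt_id' b) (hc₁.trans hb).ne'
      |>.const_sub 1).congr_deriv ?_
    ring
  exact (hinner.sqrt (one_sub_div_pos hc₁ hb).ne').const_mul c₂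

theorem contDiffOn_solution (hc₁ : 0 < c₁) : ContDiffOn ℝ 2 (solution c₁ c₂) (Ioi c₁) :=
  contDiffOn_const.mul <| ContDiffOn.sqrt
    (contDiffOn_const.sub (contDiffOn_const.div contDiffOn_id fun _ hx => (hc₁.trans hx).ne'))
    fun _ hx => (one_sub_div_pos hc₁ hx).ne'

theorem solution_mul_deriv (hc₁ : 0 < c₁) (hb : c₁ < b) :
    solution c₁ c₂ b * deriv (solution c₁ c₂) b = c₂ ^ 2 * c₁ / 2 / b ^ 2 := by
  have hsq := Real.sq_sqrt (one_sub_div_pos hc₁ hb).le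
  have hpos := Real.sqrt_pos.2 (one_sub_div_pos hc₁ hb)
  rw [(hasDerivAt_solution c₂ hc₁ hb).deriv, solution]
  field_simp

theorem odeResidual_solution (hc₁ : 0 < c₁) (hb : c₁ < b) :
    odeResidual (solution c₁ c₂) b = 0 :=
  odeResidual_eq_zero_of_mul_deriv_eq (hc₁.trans hb).ne'
    (hasDerivAt_solution c₂ hc₁ hb).differentiableAt
    (((contDiffOn_solution c₂ hc₁).deriv_of_isOpen isOpen_Ioi (m := 1) (by norm_num))
      |>.differentiableOn one_ne_zero |>.differentiableAt (Ioi_mem_nhds hb))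
    (eventually_of_mem (Ioi_mem_nhds hb) fun _ hx => solution_mul_deriv c₂ hc₁ hx)

end Solution

/-- The integrand of `P` at position `q = a` and velocity `v = a'`. -/
noncomputable def lagrangian (b q v : ℝ) : ℝ := √(8 * (2 * b * q * v + q ^ 2))

noncomputable def radicand (A : ℝ → ℝ) (b : ℝ) : ℝ := 2 * b * A b * deriv A b + A b ^ 2

section EulerLagrange

variable {A : ℝ → ℝ} {b q v : ℝ}

theorem hasDerivAt_lagrangian_velocity (h : 0 < 2 * b * q * v + q ^ 2) :
    HasDerivAt (lagrangian b q) (8 * b * q / lagrangian b q v) v := by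
  have hlin : HasDerivAt (fun y => 8 * (2 * b * q * y + q ^ 2)) (8 * (2 * b * q)) v :=
    (((hasDerivAt_id' v).const_mul (2 * b * q)).add_const (q ^ 2)).const_mul 8 |>.congr_deriv
      (by ring)
  exact (hlin.sqrt (by positivity)).congr_deriv (by unfold lagrangian; ring)

theorem hasDerivAt_lagrangian_position (h : 0 < 2 * b * q * v + q ^ 2) :
    HasDerivAt (fun y => lagrangian b y v) (8 * (b * v + q) / lagrangian b q v) q := by
  have hquad : HasDerivAt (fun x => 8 * (2 * b * x * v + x ^ 2)) (8 * (2 * (b * v + q))) q :=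
    ((((hasDerivAt_id' q).const_mul (2 * b)).mul_const v).add (hasDerivAt_pow 2 q)).const_mul 8
      |>.congr_deriv (by ring)
  exact (hquad.sqrt (by positivity)).congr_deriv (by unfold lagrangian; ring)

theorem hasDerivAt_radicand (hA : DifferentiableAt ℝ A b)
    (hA' : DifferentiableAt ℝ (deriv A) b) : HasDerivAt (radicand A) (2 * odeResidual A b) b :=
  ((((hasDerivAt_id' b).const_mul 2).fun_mul hA.hasDerivAt).fun_mul hA'.hasDerivAt).add
    (hA.hasDerivAt.fun_pow 2) |>.congr_deriv (by unfold odeResidual; ring)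

theorem hasDerivAt_momentum (hA : DifferentiableAt ℝ A b)
    (hA' : DifferentiableAt ℝ (deriv A) b) (hS : 0 < radicand A b) :
    HasDerivAt (fun x => 8 * x * A x / √(8 * radicand A x))
      (8 * (A b + b * deriv A b) / √(8 * radicand A b)
        - 64 * b * A b * odeResidual A b / √(8 * radicand A b) ^ 3) b := by
  have hnum : HasDerivAt (fun x => 8 * x * A x) (8 * (A b + b * deriv A b)) b :=
    (((hasDerivAt_id' b).const_mul 8).fun_mul hA.hasDerivAt).congr_deriv (by ring)
  have hsqrt := Real.sqrt_pos.2 (by positivity : 0 < 8 * radicand A b)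
  refine (hnum.fun_div (((hasDerivAt_radicand hA hA').const_mul 8).sqrt (by positivity))
    hsqrt.ne').congr_deriv ?_
  field_simp
  ring

theorem eulerLagrange_eq (hA : DifferentiableAt ℝ A b) (hA' : DifferentiableAt ℝ (deriv A) b)
    (hS : ∀ᶠ x in 𝓝 b, 0 < radicand A x) :
    deriv (fun x => deriv (lagrangian x (A x)) (deriv A x)) b
        - deriv (fun y => lagrangian b y (deriv A b)) (A b)
      = -64 * b * A b * odeResidual A b / √(8 * radicand A b) ^ 3 := by
  have hmomentum : (fun x => deriv (lagrangian x (A x)) (deriv A x))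
      =ᶠ[𝓝 b] fun x => 8 * x * A x / √(8 * radicand A x) :=
    hS.mono fun _ hx => (hasDerivAt_lagrangian_velocity hx).deriv
  rw [hmomentum.deriv_eq, (hasDerivAt_momentum hA hA' hS.self_of_nhds).deriv,
    (hasDerivAt_lagrangian_position hS.self_of_nhds).deriv]
  unfold lagrangian radicand
  ring

theorem continuous_odeResidual (hA : ContDiff ℝ 2 A) : Continuous (odeResidual A) := by
  have h0 := hA.continuous
  have h1 := hA.continuous_deriv one_le_two
  have h2 := (ContDiff.deriv' (n := 1) hA).continuous_deriv le_rfl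
  unfold odeResidual
  fun_prop

theorem eulerLagrange_eq_zero_iff {p q : ℝ} (hA : ContDiff ℝ 2 A)
    (hpos : ∀ b ∈ Ioo p q, 0 < A b) (hS : ∀ b ∈ Ioo p q, 0 < radicand A b) :
    (∀ b ∈ Ioo p q, deriv (fun x => deriv (lagrangian x (A x)) (deriv A x)) b
        - deriv (fun y => lagrangian b y (deriv A b)) (A b) = 0)
      ↔ ∀ b ∈ Ioo p q, odeResidual A b = 0 := by
  have hEL : ∀ b ∈ Ioo p q, deriv (fun x => deriv (lagrangian x (A x)) (deriv A x)) b
        - deriv (fun y => lagrangian b y (deriv A b)) (A b)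
      = -64 * b * A b * odeResidual A b / √(8 * radicand A b) ^ 3 := fun b hb =>
    eulerLagrange_eq (hA.differentiable two_ne_zero b) (hA.differentiable_deriv_two b)
      (eventually_of_mem (isOpen_Ioo.mem_nhds hb) hS)
  refine ⟨fun h => ?_, fun h b hb => by rw [hEL b hb, h b hb]; simp⟩
  refine (continuous_odeResidual hA).eqOn_of_eqOn_diff_singleton continuous_const isOpen_Ioo
    (c := 0) fun b ⟨hb, hb0⟩ => ?_
  have := h b hb
  rw [hEL b hb] at this
  simpa [show b ≠ 0 from hb0, (hpos b hb).ne', Real.sqrt_eq_zero', not_le.2 (hS b hb)] using this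

end EulerLagrange

end BianchiIII

theorem stmt_18_general
    (c₁ c₂ : ℝ) (hc₁ : 0 < c₁)
    (a : ℝ → ℝ) (ha : ∀ b, a b = c₂ * Real.sqrt (1 - c₁ / b)) :
    (∀ b, c₁ < b →
      a b * (b * deriv (deriv a) b + 2 * deriv a b) + b * (deriv a b) ^ 2 = 0)
    ∧
    (∀ (A : ℝ → ℝ) (p q : ℝ), ContDiff ℝ 2 A →
      (∀ b ∈ Set.Ioo p q, 0 < A b) →
      (∀ b ∈ Set.Ioo p q, 0 < 2 * b * A b * deriv A b + (A b) ^ 2) →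
      ((∀ b ∈ Set.Ioo p q,
          deriv (fun x =>
            deriv (fun y => Real.sqrt (8 * (2 * x * A x * y + (A x) ^ 2)))
              (deriv A x)) b
          - deriv (fun x => Real.sqrt (8 * (2 * b * x * deriv A b + x ^ 2)))
              (A b) = 0)
        ↔
        (∀ b ∈ Set.Ioo p q,
          A b * (b * deriv (deriv A) b + 2 * deriv A b)
            + b * (deriv A b) ^ 2 = 0))) := by
  obtain rfl : a = BianchiIII.solution c₁ c₂ := funext ha
  exact ⟨fun _ hb => BianchiIII.odeResidual_solution c₂ hc₁ hb,
    fun _ _ _ hA hpos hS => BianchiIII.eulerLagrange_eq_zero_iff hA hpos hS⟩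

/-- Bianchi Type III example: `a(b) = c₂√(1 − c₁/b)` satisfies the ODE
`a(b a'' + 2a') + b a'² = 0` on `b > c₁`, and for any positive `C²`
configuration `A` with `2bAA' + A² > 0` this ODE is precisely the
Euler–Lagrange equation of the functional `P = ∫√(8(2bAA' + A²)) db`. -/
theorem stmt_18
    (c₁ c₂ : ℝ) (hc₁ : 0 < c₁) (hc₂ : 0 < c₂)
    (a : ℝ → ℝ) (ha : ∀ b, a b = c₂ * Real.sqrt (1 - c₁ / b)) :
    (∀ b, c₁ < b →
      a b * (b * deriv (deriv a) b + 2 * deriv a b) + b * (deriv a b) ^ 2 = 0)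
    ∧
    (∀ (A : ℝ → ℝ) (p q : ℝ), ContDiff ℝ 2 A →
      (∀ b ∈ Set.Ioo p q, 0 < A b) →
      (∀ b ∈ Set.Ioo p q, 0 < 2 * b * A b * deriv A b + (A b) ^ 2) →
      ((∀ b ∈ Set.Ioo p q,
          deriv (fun x =>
            deriv (fun y => Real.sqrt (8 * (2 * x * A x * y + (A x) ^ 2)))
              (deriv A x)) b
          - deriv (fun x => Real.sqrt (8 * (2 * b * x * deriv A b + x ^ 2)))
              (A b) = 0)
        ↔
        (∀ b ∈ Set.Ioo p q,
          A b * (b * deriv (deriv A) b + 2 * deriv A b)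
            + b * (deriv A b) ^ 2 = 0))) :=
  stmt_18_general c₁ c₂ hc₁ a ha
end
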